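/- Let μ, ν : ℕ → ℝ be probability mass functions (nonnegative, summing to 1). Fix K ∈ ℕ, observations y_1, …, y_K ∈ ℕ, and detection probabilities ρ_1, …, ρ_K ∈ (0, 1). Define sequences recursively: α_0(n) = 1 if n = 0 and 0 otherwise; for k = 1, …, K: γ_k(n) = Σ_{m=0}^∞ α_{k−1}(m) · (μ^{∗m} ∗ ν)(n), and α_k(n) = C(n, y_k) · ρ_k^{y_k} · (1−ρ_k)^{n−y_k} · γ_k(n) for n ≥ y_k, with α_k(n) = 0 for n < y_k. Then for every k ∈ {0, …, K}, the sequence α_k is summable with Σ_{n=0}^∞ α_k(n) ≤ 1, and for every k ∈ {1, …, K}, the sequence γ_k is summable with Σ_{n=0}^∞ γ_k(n) ≤ 1. -/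

import Mathlib

/-!
Every message is a sub-probability sequence (nonnegative, of total mass at most one), by
induction on `k`. Convolution multiplies total masses, so each `μ^{∗m} ∗ ν` has mass at most one;
`γ_k` is the mixture of these sequences with weights `α_{k−1}`, so by Tonelli its mass is at most
that of `α_{k−1}`; and `α_k ≤ γ_k` pointwise, because the likelihood
`C(n, y) ρ^y (1−ρ)^{n−y}` is one term of the binomial expansion of `(ρ + (1−ρ))^n = 1`.
-/

/-- Convolution of two sequences: `(a ∗ b)(n) = Σ_{j=0}^{n} a(j) b(n−j)`. -/
noncomputable def seqConv (a b : ℕ → ℝ) (n : ℕ) : ℝ :=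
  ∑ j ∈ Finset.range (n + 1), a j * b (n - j)

/-- `m`-fold convolution power: `μ^{∗0} = δ₀` and `μ^{∗(m+1)} = μ^{∗m} ∗ μ`. -/
noncomputable def convPow (μ : ℕ → ℝ) : ℕ → ℕ → ℝ
  | 0 => fun n => if n = 0 then 1 else 0
  | m + 1 => seqConv (convPow μ m) μ

/-- Forward messages of the integer HMM: `(fwd μ ν y ρ k).1 = α_k` and
`(fwd μ ν y ρ k).2 = γ_k` (the second component at `k = 0` is a dummy).
`α₀ = δ₀`; `γ_k(n) = Σₘ α_{k−1}(m) (μ^{∗m} ∗ ν)(n)`; and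
`α_k(n) = C(n, y_k) ρ_k^{y_k} (1−ρ_k)^{n−y_k} γ_k(n)` for `n ≥ y_k`, else `0`. -/
noncomputable def fwd (μ ν : ℕ → ℝ) (y : ℕ → ℕ) (ρ : ℕ → ℝ) : ℕ → (ℕ → ℝ) × (ℕ → ℝ)
  | 0 => (fun n => if n = 0 then 1 else 0, fun _ => 0)
  | k + 1 =>
    let γ : ℕ → ℝ := fun n => ∑' m : ℕ, (fwd μ ν y ρ k).1 m * seqConv (convPow μ m) ν n
    (fun n =>
      if y (k + 1) ≤ n then
        (n.choose (y (k + 1)) : ℝ) * ρ (k + 1) ^ (y (k + 1)) *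
          (1 - ρ (k + 1)) ^ (n - y (k + 1)) * γ n
      else 0,
     γ)

open Finset

structure IsSubPMF (f : ℕ → ℝ) : Prop where
  nonneg : ∀ n, 0 ≤ f n
  summable : Summable f
  tsum_le_one : ∑' n, f n ≤ 1

namespace IsSubPMF

variable {f g : ℕ → ℝ}

theorem of_tsum_eq_one (hf : ∀ n, 0 ≤ f n) (h : ∑' n, f n = 1) : IsSubPMF f where
  nonneg := hf
  summable := by
    by_contra hs
    rw [tsum_eq_zero_of_not_summable hs] at h
    exact zero_ne_one h
  tsum_le_one := h.le

theorem of_nonneg_of_le (hf : IsSubPMF f) (hg : ∀ n, 0 ≤ g n) (hgf : ∀ n, g n ≤ f n) :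
    IsSubPMF g :=
  have hgs : Summable g := hf.summable.of_nonneg_of_le hg hgf
  ⟨hg, hgs, (hgs.tsum_le_tsum hgf hf.summable).trans hf.tsum_le_one⟩

theorem delta : IsSubPMF fun n => if n = 0 then 1 else 0 where
  nonneg n := by positivity
  summable := summable_of_ne_finset_zero (s := {0}) fun n hn => by simp_all
  tsum_le_one := by rw [tsum_ite_eq]

protected theorem seqConv (hf : IsSubPMF f) (hg : IsSubPMF g) : IsSubPMF (seqConv f g) := by
  have hf' : Summable fun n => ‖f n‖ := by simpa [abs_of_nonneg (hf.nonneg _)] using hf.summable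
  have hg' : Summable fun n => ‖g n‖ := by simpa [abs_of_nonneg (hg.nonneg _)] using hg.summable
  refine ⟨fun n => sum_nonneg fun j _ => mul_nonneg (hf.nonneg j) (hg.nonneg _),
    (summable_norm_sum_mul_range_of_summable_norm hf' hg').of_norm, ?_⟩
  calc ∑' n, seqConv f g n = (∑' n, f n) * ∑' n, g n :=
        (tsum_mul_tsum_eq_tsum_sum_range_of_summable_norm hf' hg').symm
    _ ≤ 1 := mul_le_one₀ hf.tsum_le_one (tsum_nonneg hg.nonneg) hg.tsum_le_one

protected theorem convPow (hf : IsSubPMF f) (m : ℕ) : IsSubPMF (convPow f m) := by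
  induction m with
  | zero => exact delta
  | succ m ih => exact ih.seqConv hf

theorem mixture {a : ℕ → ℝ} {c : ℕ → ℕ → ℝ} (ha : IsSubPMF a) (hc : ∀ m, IsSubPMF (c m)) :
    IsSubPMF fun n => ∑' m, a m * c m n := by
  have hrow_le : ∀ m, ∑' n, a m * c m n ≤ a m := fun m => by
    rw [tsum_mul_left]
    exact mul_le_of_le_one_right (ha.nonneg m) (hc m).tsum_le_one
  have hjoint : Summable (Function.uncurry fun m n => a m * c m n) :=
    (summable_prod_of_nonneg fun p => mul_nonneg (ha.nonneg p.1) ((hc p.1).nonneg p.2)).2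
      ⟨fun m => (hc m).summable.mul_left (a m),
        ha.summable.of_nonneg_of_le (fun m => tsum_nonneg fun n =>
          mul_nonneg (ha.nonneg m) ((hc m).nonneg n)) hrow_le⟩
  refine ⟨fun n => tsum_nonneg fun m => mul_nonneg (ha.nonneg m) ((hc m).nonneg n),
    hjoint.prod_symm.prod, ?_⟩
  calc ∑' n, ∑' m, a m * c m n = ∑' m, ∑' n, a m * c m n := hjoint.tsum_comm
    _ ≤ ∑' m, a m := hjoint.prod.tsum_le_tsum hrow_le ha.summable
    _ ≤ 1 := ha.tsum_le_one

end IsSubPMF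

theorem choose_mul_pow_mul_one_sub_pow_le_one {p : ℝ} (hp0 : 0 ≤ p) (hp1 : p ≤ 1) (n k : ℕ) :
    (n.choose k : ℝ) * p ^ k * (1 - p) ^ (n - k) ≤ 1 := by
  rcases le_or_gt k n with hkn | hnk
  · have hq : 0 ≤ 1 - p := sub_nonneg.2 hp1
    calc (n.choose k : ℝ) * p ^ k * (1 - p) ^ (n - k)
        = p ^ k * (1 - p) ^ (n - k) * n.choose k := by ring
      _ ≤ ∑ i ∈ range (n + 1), p ^ i * (1 - p) ^ (n - i) * n.choose i :=
        single_le_sum (f := fun i => p ^ i * (1 - p) ^ (n - i) * (n.choose i : ℝ))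
          (fun i _ => by positivity) (mem_range_succ_iff.2 hkn)
      _ = 1 := by rw [← add_pow, add_sub_cancel, one_pow]
  · simp [Nat.choose_eq_zero_of_lt hnk]

section ForwardMessages

variable {μ ν : ℕ → ℝ} {y : ℕ → ℕ} {ρ : ℕ → ℝ}

theorem fwd_succ_fst_apply (k n : ℕ) :
    (fwd μ ν y ρ (k + 1)).1 n =
      if y (k + 1) ≤ n then
        (n.choose (y (k + 1)) : ℝ) * ρ (k + 1) ^ (y (k + 1)) *
          (1 - ρ (k + 1)) ^ (n - y (k + 1)) * (fwd μ ν y ρ (k + 1)).2 n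
      else 0 :=
  rfl

theorem isSubPMF_fwd_zero_fst : IsSubPMF (fwd μ ν y ρ 0).1 :=
  IsSubPMF.delta

theorem isSubPMF_fwd_succ_snd (hμ : IsSubPMF μ) (hν : IsSubPMF ν) {k : ℕ}
    (hα : IsSubPMF (fwd μ ν y ρ k).1) : IsSubPMF (fwd μ ν y ρ (k + 1)).2 :=
  hα.mixture fun m => (hμ.convPow m).seqConv hν

theorem isSubPMF_fwd_succ_fst {k : ℕ} (hρ0 : 0 ≤ ρ (k + 1)) (hρ1 : ρ (k + 1) ≤ 1)
    (hγ : IsSubPMF (fwd μ ν y ρ (k + 1)).2) : IsSubPMF (fwd μ ν y ρ (k + 1)).1 := by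
  have hq : 0 ≤ 1 - ρ (k + 1) := sub_nonneg.2 hρ1
  refine hγ.of_nonneg_of_le (fun n => ?_) (fun n => ?_) <;> rw [fwd_succ_fst_apply] <;> split_ifs
  · exact mul_nonneg (by positivity) (hγ.nonneg n)
  · rfl
  · exact mul_le_of_le_one_left (hγ.nonneg n) (choose_mul_pow_mul_one_sub_pow_le_one hρ0 hρ1 _ _)
  · exact hγ.nonneg n

end ForwardMessages

/-- The forward messages are summable with total mass at most `1`: for `k ≤ K`,
`Σₙ α_k(n) ≤ 1`, and for `1 ≤ k ≤ K`, `Σₙ γ_k(n) ≤ 1`. -/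
theorem forward_messages_mass_le_one
    (μ : ℕ → ℝ) (hμnn : ∀ j, 0 ≤ μ j) (hμsum : ∑' j : ℕ, μ j = 1)
    (ν : ℕ → ℝ) (hνnn : ∀ l, 0 ≤ ν l) (hνsum : ∑' l : ℕ, ν l = 1)
    (K : ℕ) (y : ℕ → ℕ) (ρ : ℕ → ℝ)
    (hρ : ∀ k, 1 ≤ k → k ≤ K → ρ k ∈ Set.Ioo (0 : ℝ) 1) :
    (∀ k ≤ K, Summable (fwd μ ν y ρ k).1 ∧ ∑' n : ℕ, (fwd μ ν y ρ k).1 n ≤ 1) ∧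
    (∀ k, 1 ≤ k → k ≤ K →
      Summable (fwd μ ν y ρ k).2 ∧ ∑' n : ℕ, (fwd μ ν y ρ k).2 n ≤ 1) := by
  have hμ := IsSubPMF.of_tsum_eq_one hμnn hμsum
  have hν := IsSubPMF.of_tsum_eq_one hνnn hνsum
  have hα : ∀ k ≤ K, IsSubPMF (fwd μ ν y ρ k).1 := by
    intro k hk
    induction k with
    | zero => exact isSubPMF_fwd_zero_fst
    | succ k ih =>
      obtain ⟨hρ0, hρ1⟩ := hρ (k + 1) le_add_self hk
      exact isSubPMF_fwd_succ_fst hρ0.le hρ1.le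
        (isSubPMF_fwd_succ_snd hμ hν (ih (Nat.le_of_succ_le hk)))
  refine ⟨fun k hk => ⟨(hα k hk).summable, (hα k hk).tsum_le_one⟩, fun k hk1 hkK => ?_⟩
  obtain ⟨k, rfl⟩ := Nat.exists_eq_add_of_le' hk1
  have hγ := isSubPMF_fwd_succ_snd hμ hν (hα k (Nat.le_of_succ_le hkK))
  exact ⟨hγ.summable, hγ.tsum_le_one⟩
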